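/- If G is a connected graph and G' is the graph obtained from G by iteratively deleting vertices of degree 1 (the base graph of G), and G' is nonempty, then dem(G) = dem(G'). -/

import Mathlib

open SimpleGraph

/-- `e` is monitored by vertex `x` in `G`: some vertex `y` has its distance to `x`
changed when `e` is deleted (distances in `ℕ∞`, `⊤` if disconnected). -/
def monitors {V : Type*} (G : SimpleGraph V) (x : V) (e : Sym2 V) : Prop :=
  ∃ y : V, G.edist x y ≠ (G.deleteEdges {e}).edist x y

/-- `M` is a distance-edge-monitoring set of `G`. -/
def IsDEMSet {V : Type*} (G : SimpleGraph V) (M : Set V) : Prop :=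
  ∀ e ∈ G.edgeSet, ∃ x ∈ M, monitors G x e

/-- The smallest size of a distance-edge-monitoring set of `G`. -/
noncomputable def dem (V : Type*) [Fintype V] (G : SimpleGraph V) : ℕ :=
  sInf {k | ∃ M : Finset V, M.card = k ∧ IsDEMSet G ↑M}

/-- The set `P(M, e)` of pairs `(x, y)`, `x ∈ M`, whose distance changes when `e` is deleted. -/
def pairs {V : Type*} (G : SimpleGraph V) (M : Set V) (e : Sym2 V) : Set (V × V) :=
  {p | p.1 ∈ M ∧ G.edist p.1 p.2 ≠ (G.deleteEdges {e}).edist p.1 p.2}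

/-- `C` is a vertex cover of `G`. -/
def IsVC {V : Type*} (G : SimpleGraph V) (C : Set V) : Prop :=
  ∀ e ∈ G.edgeSet, ∃ v ∈ C, v ∈ e

/-- The vertex cover number of `G`. -/
noncomputable def vcNum (V : Type*) [Fintype V] (G : SimpleGraph V) : ℕ :=
  sInf {k | ∃ C : Finset V, C.card = k ∧ IsVC G ↑C}

/-- The feedback edge set number: minimum number of edges whose deletion leaves a forest. -/
noncomputable def fes (V : Type*) [Fintype V] (G : SimpleGraph V) : ℕ :=
  sInf {k | ∃ F : Finset (Sym2 V), F.card = k ∧ (G.deleteEdges ↑F).IsAcyclic}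

/-!
Every edge with an endpoint outside `S` is a bridge: the vertices of a cycle could be added to
`S`. A bridge is monitored by every vertex of a connected graph. Paths between vertices of `S`
stay in `S` for the same reason, so `G[S]` and `G` have the same distances on `S`, also after an
edge of `G[S]` is deleted; hence a monitoring set of `G[S]` monitors `G`.

Conversely, a vertex `u ∉ S` hangs off `S` through a bridge `zs` with `z ∉ S`, `s ∈ S` and `u` on
the side of `z`. Deleting an edge of `G[S]` changes no distance on that side, and paths from it
to the other side pass through `z` and `s`; so a distance change seen from `u` is seen from its
anchor `s`. Replacing every monitor by its anchor, and every witness by its anchor, turns a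
monitoring set of `G` into one of `G[S]` that is no larger.
-/

namespace SimpleGraph

variable {V : Type*} {G H : SimpleGraph V} {u v w : V}

theorem le_edist_of_forall_isPath {d : ℕ∞} (h : ∀ p : G.Walk u v, p.IsPath → d ≤ p.length) :
    d ≤ G.edist u v := by
  classical
  by_cases hr : G.Reachable u v
  · obtain ⟨p, hp⟩ := hr.exists_walk_length_eq_edist
    calc d ≤ p.bypass.length := h _ p.bypass_isPath
      _ ≤ p.length := by exact_mod_cast p.length_bypass_le_length
      _ = G.edist u v := hp
  · simp [edist_eq_top_of_not_reachable hr]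

theorem edist_eq_add_of_forall_mem_support (h : ∀ p : G.Walk u v, w ∈ p.support) :
    G.edist u v = G.edist u w + G.edist w v := by
  classical
  refine le_antisymm G.edist_triangle (le_edist_of_forall_isPath fun p _ => ?_)
  calc G.edist u w + G.edist w v
      ≤ (p.takeUntil w (h p)).length + (p.dropUntil w (h p)).length :=
        add_le_add (edist_le _) (edist_le _)
    _ = p.length := by rw [← Nat.cast_add, ← Walk.length_append, Walk.take_spec]

theorem edist_ne_of_forall_mem_support (hHG : H ≤ G) (h : ∀ p : G.Walk u v, w ∈ p.support)
    (huw : G.edist u w = H.edist u w) (huv : G.edist u v ≠ H.edist u v) :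
    G.edist w v ≠ H.edist w v := by
  have hH : ∀ p : H.Walk u v, w ∈ p.support := fun p => by
    simpa using h (p.mapLe hHG)
  rw [edist_eq_add_of_forall_mem_support h, edist_eq_add_of_forall_mem_support hH, huw] at huv
  exact fun hwv => huv (by rw [hwv])

theorem Walk.IsTrail.notMem_support_of_not_reachable [DecidableEq V] {e : Sym2 V}
    {p : G.Walk u v} (hp : p.IsTrail) (hu : ¬(G.deleteEdges {e}).Reachable u w)
    (hv : ¬(G.deleteEdges {e}).Reachable v w) : w ∉ p.support := by
  intro hw
  have h₁ : e ∈ (p.takeUntil w hw).edges := by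
    by_contra h
    exact hu ((p.takeUntil w hw).toDeleteEdge e h).reachable
  have h₂ : e ∈ (p.dropUntil w hw).edges := by
    by_contra h
    exact hv ((p.dropUntil w hw).toDeleteEdge e h).reachable.symm
  have hnd := hp.edges_nodup
  rw [← p.take_spec hw, Walk.edges_append] at hnd
  exact List.disjoint_of_nodup_append hnd h₁ h₂

theorem Walk.reachable_deleteEdges_or {a b : V} :
    ∀ {x : V} (_ : G.Walk x a),
      (G.deleteEdges {s(a, b)}).Reachable x a ∨ (G.deleteEdges {s(a, b)}).Reachable x b
  | _, .nil => .inl .rfl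
  | x, .cons (v := y) hxy p => by
    by_cases he : s(x, y) = s(a, b)
    · rcases Sym2.eq_iff.1 he with ⟨rfl, -⟩ | ⟨rfl, -⟩
      · exact .inl .rfl
      · exact .inr .rfl
    · have hadj : (G.deleteEdges {s(a, b)}).Adj x y := by simp [hxy, he]
      exact p.reachable_deleteEdges_or.imp hadj.reachable.trans hadj.reachable.trans

theorem Walk.exists_adj_reachable_deleteEdges {S : Set V} :
    ∀ {u v : V} (_ : G.Walk u v), u ∉ S → v ∈ S →
      ∃ z ∉ S, ∃ s ∈ S, G.Adj z s ∧ (G.deleteEdges {s(z, s)}).Reachable z u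
  | _, _, .nil, hu, hv => absurd hv hu
  | u, _, .cons (v := y) huy p, hu, hv => by
    by_cases hy : y ∈ S
    · exact ⟨u, hu, y, hy, huy, .rfl⟩
    obtain ⟨z, hz, s, hs, hzs, hzy⟩ := p.exists_adj_reachable_deleteEdges hy hv
    have hadj : (G.deleteEdges {s(z, s)}).Adj y u := by
      simp only [deleteEdges_adj, Set.mem_singleton_iff]
      exact ⟨huy.symm, fun h => hu (by grind [Sym2.eq_iff])⟩
    exact ⟨z, hz, s, hs, hzs, hzy.trans hadj.reachable⟩

theorem Walk.two_le_ncard_support_inter_neighborSet [Finite V] {p : G.Walk u v}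
    (h : (p.toSubgraph.neighborSet w).ncard = 2) :
    2 ≤ ({x | x ∈ p.support} ∩ G.neighborSet w).ncard :=
  h.symm.le.trans <| Set.ncard_le_ncard (fun _ hw =>
    ⟨p.mem_verts_toSubgraph.1 hw.snd_mem, p.toSubgraph.adj_sub hw⟩) (Set.toFinite _)

theorem edist_induce_of_forall_support_subset {S : Set V}
    (hS : ∀ ⦃x y : V⦄ (p : G.Walk x y), p.IsPath → x ∈ S → y ∈ S → ∀ v ∈ p.support, v ∈ S)
    (x y : S) : (G.induce S).edist x y = G.edist x y := by
  refine le_antisymm (le_edist_of_forall_isPath fun p hp => ?_) (le_iInf fun p => ?_)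
  · have hpS := hS p hp x.2 y.2
    calc (G.induce S).edist x y ≤ (p.induce S hpS).length := edist_le _
      _ = p.length := by
        rw [← Walk.length_map (Embedding.induce S).toHom, Walk.map_induce]; rfl
  · calc G.edist x y ≤ (p.map (Embedding.induce S).toHom).length := edist_le _
      _ = p.length := by rw [Walk.length_map]

theorem induce_deleteEdges_map {S : Set V} (e : Sym2 S) :
    (G.deleteEdges {e.map (↑)}).induce S = (G.induce S).deleteEdges {e} := by
  ext c d
  simp only [comap_adj, Function.Embedding.coe_subtype, deleteEdges_adj, Set.mem_singleton_iff,
    ← Sym2.map_mk, (Sym2.map.injective Subtype.val_injective).eq_iff]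

end SimpleGraph

section Monitoring

variable {V : Type*} {G : SimpleGraph V}

theorem monitors_of_isBridge (hG : G.Connected) {e : Sym2 V} (he : G.IsBridge e) (x : V) :
    monitors G x e := by
  induction e with | h a b => ?_
  have hK : ∀ y, G.edist x y = (G.deleteEdges {s(a, b)}).edist x y →
      (G.deleteEdges {s(a, b)}).Reachable x y := fun y hy =>
    edist_ne_top_iff_reachable.1 (hy ▸ edist_ne_top_iff_reachable.2 (hG x y))
  rcases (hG x a).some.reachable_deleteEdges_or (b := b) with h | h
  · exact ⟨b, fun hb => he (h.symm.trans (hK b hb))⟩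
  · exact ⟨a, fun ha => he ((hK a ha).symm.trans h)⟩

theorem isDEMSet_univ (G : SimpleGraph V) : IsDEMSet G Set.univ := by
  intro e he
  induction e with | h a b => ?_
  refine ⟨a, trivial, b, fun h => ?_⟩
  rw [edist_eq_one_iff_adj.2 he, eq_comm, edist_eq_one_iff_adj] at h
  simp at h

theorem IsDEMSet.nonempty {M : Set V} (hM : IsDEMSet G M) {e : Sym2 V} (he : e ∈ G.edgeSet) :
    M.Nonempty :=
  let ⟨x, hx, _⟩ := hM e he
  ⟨x, hx⟩

theorem dem_le_card [Fintype V] {M : Finset V} (hM : IsDEMSet G M) : dem V G ≤ M.card :=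
  Nat.sInf_le ⟨M, rfl, hM⟩

theorem exists_isDEMSet_card_eq_dem [Fintype V] (G : SimpleGraph V) :
    ∃ M : Finset V, M.card = dem V G ∧ IsDEMSet G M :=
  Nat.sInf_mem (s := {k | ∃ M : Finset V, M.card = k ∧ IsDEMSet G M})
    ⟨_, Finset.univ, rfl, by simpa using isDEMSet_univ G⟩

end Monitoring

section TwoCore

variable {V : Type*} {G H : SimpleGraph V} {S T : Set V} {a b u v x y z s : V}

def MinDegreeTwoOn (G : SimpleGraph V) (T : Set V) : Prop :=
  ∀ v ∈ T, 2 ≤ (T ∩ G.neighborSet v).ncard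

/-- `S` is the vertex set of the base graph of `G`. -/
def IsTwoCore (G : SimpleGraph V) (S : Set V) : Prop :=
  MinDegreeTwoOn G S ∧ ∀ T, MinDegreeTwoOn G T → T ⊆ S

namespace IsTwoCore

variable [Finite V] (hS : IsTwoCore G S)
include hS

theorem subset_of_forall_notMem (hT : ∀ v ∈ T, v ∉ S → 2 ≤ (T ∩ G.neighborSet v).ncard) :
    T ⊆ S := by
  refine (Set.union_subset_iff.1 (hS.2 (S ∪ T) fun v hv => ?_)).2
  by_cases hvS : v ∈ S
  · exact (hS.1 v hvS).trans (Set.ncard_le_ncard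
      (Set.inter_subset_inter_left _ Set.subset_union_left) (Set.toFinite _))
  · exact (hT v (hv.resolve_left hvS) hvS).trans (Set.ncard_le_ncard
      (Set.inter_subset_inter_left _ Set.subset_union_right) (Set.toFinite _))

theorem support_subset_of_isPath {p : G.Walk x y} (hp : p.IsPath) (hx : x ∈ S) (hy : y ∈ S) :
    ∀ v ∈ p.support, v ∈ S := by
  refine hS.subset_of_forall_notMem fun v hv hvS => ?_
  obtain ⟨i, rfl, hi⟩ := p.mem_support_iff_exists_getVert.1 hv
  have hi0 : i ≠ 0 := by rintro rfl; exact hvS (by simpa using hx)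
  have hil : i ≠ p.length := by rintro rfl; exact hvS (by simpa using hy)
  exact p.two_le_ncard_support_inter_neighborSet
    (hp.ncard_neighborSet_toSubgraph_internal_eq_two hi0 (by omega))

theorem support_subset_of_isCycle {p : G.Walk u u} (hp : p.IsCycle) : ∀ v ∈ p.support, v ∈ S :=
  hS.subset_of_forall_notMem fun _ hv _ =>
    p.two_le_ncard_support_inter_neighborSet (hp.ncard_neighborSet_toSubgraph_eq_two hv)

theorem isBridge_of_notMem (hab : G.Adj a b) (ha : a ∉ S) : G.IsBridge s(a, b) := fun hr => by
  obtain ⟨u, c, hc, he⟩ := adj_and_reachable_delete_edges_iff_exists_cycle.1 ⟨hab, hr⟩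
  exact ha (hS.support_subset_of_isCycle hc a (c.fst_mem_support_of_mem_edges he))

theorem edist_induce (hHG : H ≤ G) (x y : S) : (H.induce S).edist x y = H.edist x y :=
  edist_induce_of_forall_support_subset (fun _ _ p hp hx hy => by
    simpa using hS.support_subset_of_isPath (hp.mapLe hHG) hx hy) x y

theorem monitors_induce_iff {x : S} {e : Sym2 S} :
    monitors (G.induce S) x e ↔ ∃ y ∈ S, G.edist x y ≠ (G.deleteEdges {e.map (↑)}).edist x y := by
  simp only [monitors, ← induce_deleteEdges_map, hS.edist_induce le_rfl,
    hS.edist_induce (deleteEdges_le _), Subtype.exists, exists_prop]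

/-- The edge `zs` is a bridge whose `z`-side avoids `S`: distances inside that side do not see
the edge `ab`, and every walk from it to the far side runs through `z` and then `s`. -/
theorem edist_ne_of_reachable_deleteEdges (hG : G.Connected) (hz : z ∉ S) (hs : s ∈ S)
    (hzs : G.Adj z s) (hu : (G.deleteEdges {s(z, s)}).Reachable z u) (ha : a ∈ S) (hb : b ∈ S)
    (huy : G.edist u y ≠ (G.deleteEdges {s(a, b)}).edist u y) :
    G.edist s y ≠ (G.deleteEdges {s(a, b)}).edist s y := by
  classical
  set K := G.deleteEdges {s(z, s)}
  set E := G.deleteEdges {s(a, b)}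
  have hfar : ∀ t ∈ S, ¬K.Reachable z t := by
    intro t ht hzt
    obtain ⟨p, hp⟩ := (hG s t).exists_isPath
    have hz' : z ∉ p.support := fun h => hz (hS.support_subset_of_isPath hp hs ht z h)
    exact hS.isBridge_of_notMem hzs hz <| hzt.trans
      (p.toDeleteEdge _ fun h => hz' (p.fst_mem_support_of_mem_edges h)).reachable.symm
  have hnear : ∀ v w, K.Reachable z v → K.Reachable z w → G.edist v w = E.edist v w := by
    intro v w hv hw
    refine le_antisymm (edist_anti (deleteEdges_le _)) (le_edist_of_forall_isPath fun p hp => ?_)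
    have ha' : a ∉ p.support := hp.isTrail.notMem_support_of_not_reachable
      (fun h => hfar a ha (hv.trans h)) (fun h => hfar a ha (hw.trans h))
    exact (edist_le (p.toDeleteEdge _ fun h => ha' (p.fst_mem_support_of_mem_edges h))).trans_eq
      (by simp)
  have hcut : ∀ v, K.Reachable z v → ∀ p : G.Walk v y, s(z, s) ∈ p.edges := fun v hv p => by
    by_contra h
    exact huy (hnear u y hu (hv.trans (p.toDeleteEdge _ h).reachable))
  have hzy := edist_ne_of_forall_mem_support (deleteEdges_le _)
    (fun p => p.fst_mem_support_of_mem_edges (hcut u hu p)) (hnear u z hu .rfl) huy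
  refine edist_ne_of_forall_mem_support (deleteEdges_le _)
    (fun p => p.snd_mem_support_of_mem_edges (hcut z .rfl p)) ?_ hzy
  have hE : E.Adj z s := by
    simp only [E, deleteEdges_adj, Set.mem_singleton_iff]
    exact ⟨hzs, fun h => hz (by grind [Sym2.eq_iff])⟩
  rw [edist_eq_one_iff_adj.2 hzs, edist_eq_one_iff_adj.2 hE]

theorem exists_anchor (hG : G.Connected) (hne : S.Nonempty) (u : V) :
    ∃ s ∈ S, ∀ a ∈ S, ∀ b ∈ S, ∀ y, G.edist u y ≠ (G.deleteEdges {s(a, b)}).edist u y →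
      G.edist s y ≠ (G.deleteEdges {s(a, b)}).edist s y := by
  by_cases hu : u ∈ S
  · exact ⟨u, hu, fun _ _ _ _ _ h => h⟩
  obtain ⟨t, ht⟩ := hne
  obtain ⟨z, hz, s, hs, hzs, hzu⟩ := (hG u t).some.exists_adj_reachable_deleteEdges hu ht
  exact ⟨s, hs, fun a ha b hb y => hS.edist_ne_of_reachable_deleteEdges hG hz hs hzs hzu ha hb⟩

theorem isDEMSet_image_val [DecidableEq V] (hG : G.Connected) {M : Finset S}
    (hM : IsDEMSet (G.induce S) M) (hne : M.Nonempty) : IsDEMSet G ↑(M.image Subtype.val) := by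
  obtain ⟨x₀, hx₀⟩ := hne
  intro e he
  induction e with | h a b => ?_
  by_cases hab : a ∈ S ∧ b ∈ S
  · obtain ⟨x, hx, hmon⟩ := hM s(⟨a, hab.1⟩, ⟨b, hab.2⟩) he
    obtain ⟨y, -, hy⟩ := hS.monitors_induce_iff.1 hmon
    exact ⟨x, Finset.mem_image_of_mem _ hx, y, by simpa using hy⟩
  · have hbr : G.IsBridge s(a, b) := by
      rcases not_and_or.1 hab with ha | hb
      · exact hS.isBridge_of_notMem he ha
      · rw [Sym2.eq_swap]
        exact hS.isBridge_of_notMem (G.adj_symm he) hb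
    exact ⟨x₀, Finset.mem_image_of_mem _ hx₀, monitors_of_isBridge hG hbr x₀⟩

theorem exists_isDEMSet_induce (hG : G.Connected) (hne : S.Nonempty) {M : Finset V}
    (hM : IsDEMSet G M) : ∃ M' : Finset S, M'.card ≤ M.card ∧ IsDEMSet (G.induce S) M' := by
  classical
  choose f hfS hf using hS.exists_anchor hG hne
  refine ⟨M.image fun u => ⟨f u, hfS u⟩, Finset.card_image_le, fun e he => ?_⟩
  induction e with | h a b => ?_
  obtain ⟨u, hu, y, hy⟩ := hM s(a, b) he
  refine ⟨_, Finset.mem_image_of_mem _ hu, hS.monitors_induce_iff.2 ⟨f y, hfS y, ?_⟩⟩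
  have hyu := hf u a a.2 b b.2 y hy
  rw [edist_comm, edist_comm (G := G.deleteEdges _)] at hyu
  have := hf y a a.2 b b.2 (f u) hyu
  rwa [edist_comm, edist_comm (G := G.deleteEdges _)] at this

end IsTwoCore

end TwoCore

theorem stmt17 {V : Type*} [Fintype V] [DecidableEq V] (G : SimpleGraph V)
    (hG : G.Connected) (S : Set V) [DecidablePred (· ∈ S)]
    (hS : ∀ v ∈ S, 2 ≤ (S ∩ G.neighborSet v).ncard)
    (hmax : ∀ T : Set V, (∀ v ∈ T, 2 ≤ (T ∩ G.neighborSet v).ncard) → T ⊆ S)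
    (hne : S.Nonempty) :
    dem V G = dem S (G.induce S) := by
  have hcore : IsTwoCore G S := ⟨hS, hmax⟩
  obtain ⟨v, hv⟩ := hne
  obtain ⟨w, hw, hvw⟩ : (S ∩ G.neighborSet v).Nonempty :=
    Set.nonempty_of_ncard_ne_zero (by have := hS v hv; omega)
  refine le_antisymm ?_ ?_
  · obtain ⟨M, hMcard, hM⟩ := exists_isDEMSet_card_eq_dem (G.induce S)
    have hMne : M.Nonempty := by
      simpa using hM.nonempty (e := s(⟨v, hv⟩, ⟨w, hw⟩)) hvw
    calc dem V G ≤ (M.image Subtype.val).card :=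
          dem_le_card (hcore.isDEMSet_image_val hG hM hMne)
      _ ≤ M.card := Finset.card_image_le
      _ = dem S (G.induce S) := hMcard
  · obtain ⟨M, hMcard, hM⟩ := exists_isDEMSet_card_eq_dem G
    obtain ⟨M', hM'card, hM'⟩ := hcore.exists_isDEMSet_induce hG ⟨v, hv⟩ hM
    exact (dem_le_card hM').trans (hM'card.trans hMcard.le)
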